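/- Let k ≥ 2 and let μ be the product Lebesgue measure on [0,1]^{ℕ^{[≤k]}}. Then sup over measurable f : [0,1]^{{1,…,k−1}^{[≤k]}} → [0,1] of μ({x : f(x restricted to windows of {1,…,k−1}) > f(x restricted to windows of {2,…,k})}) = 1 − 1/k. -/

import Mathlib

open MeasureTheory unitInterval ENNReal

namespace Stmt16
open Finset


/-- cyclic permutation of {1,…,k} (fixes everything else, for k ≥ 1) -/
def cyc (k : ℕ) : ℕ → ℕ := fun i => if i = k then 1 else if 1 ≤ i ∧ i < k then i + 1 else i
def cycInv (k : ℕ) : ℕ → ℕ := fun i => if i = 1 then k else if 2 ≤ i ∧ i ≤ k then i - 1 else i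

lemma cyc_left (k : ℕ) (hk : 1 ≤ k) : ∀ i, cycInv k (cyc k i) = i := by
  intro i; unfold cyc cycInv; split_ifs <;> omega

lemma cyc_right (k : ℕ) (hk : 1 ≤ k) : ∀ i, cyc k (cycInv k i) = i := by
  intro i; unfold cyc cycInv; split_ifs <;> omega

def cycE (k : ℕ) (hk : 1 ≤ k) : ℕ ≃ ℕ := ⟨cyc k, cycInv k, cyc_left k hk, cyc_right k hk⟩

lemma cyc_mem (k : ℕ) {i : ℕ} (h : i ∈ Icc 1 k) : cyc k i ∈ Icc 1 k := by
  simp only [mem_Icc] at *; unfold cyc; split_ifs <;> omega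

lemma cycInv_mem (k : ℕ) {i : ℕ} (h : i ∈ Icc 1 k) : cycInv k i ∈ Icc 1 k := by
  simp only [mem_Icc] at *; unfold cycInv; split_ifs <;> omega

lemma cyc_eq_succ (k : ℕ) {i : ℕ} (h1 : 1 ≤ i) (h2 : i ≤ k - 1) (hk : 2 ≤ k) :
    cyc k i = i + 1 := by unfold cyc; split_ifs <;> omega

lemma cyc_iter_mem (k j : ℕ) {i : ℕ} (h : i ∈ Icc 1 k) : (cyc k)^[j] i ∈ Icc 1 k := by
  induction j with
  | zero => simpa using h
  | succ n ih => rw [Function.iterate_succ_apply']; exact cyc_mem k ih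

lemma cyc_iter_formula (k : ℕ) : ∀ j, j ≤ k → ∀ i, 1 ≤ i → i ≤ k →
    (cyc k)^[j] i = if i + j ≤ k then i + j else i + j - k := by
  intro j
  induction j with
  | zero => intro _ i h1 h2; simp only [Function.iterate_zero, id_eq]; split_ifs <;> omega
  | succ n ih =>
    intro hn i h1 h2
    rw [Function.iterate_succ_apply]
    by_cases hik : i = k
    · have hc : cyc k i = 1 := by unfold cyc; split_ifs <;> omega
      rw [hc, ih (by omega) 1 (by omega) (by omega)]
      split_ifs <;> omega
    · have hc : cyc k i = i + 1 := by unfold cyc; split_ifs <;> omega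
      rw [hc, ih (by omega) (i+1) (by omega) (by omega)]
      split_ifs <;> omega

lemma cyc_iter_k (k : ℕ) {i : ℕ} (h : i ∈ Icc 1 k) : (cyc k)^[k] i = i := by
  simp only [mem_Icc] at h
  rw [cyc_iter_formula k k le_rfl i h.1 h.2]
  split_ifs <;> omega



variable (k : ℕ)

abbrev ι (k : ℕ) := {A : Finset ℕ // A.card ≤ k}

noncomputable def tk (k : ℕ) : Finset (ι k) :=
  ((Icc 1 k).powerset).subtype (fun A => A.card ≤ k)

lemma mem_tk {k : ℕ} {a : ι k} : a ∈ tk k ↔ a.1 ⊆ Icc 1 k := by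
  simp [tk, Finset.mem_subtype, Finset.mem_powerset]

lemma card_le_of_subset_Icc {k : ℕ} {A : Finset ℕ} (h : A ⊆ Icc 1 k) : A.card ≤ k := by
  have := Finset.card_le_card h
  simpa [Nat.card_Icc] using this

def coord {k : ℕ} (A : Finset ℕ) (h : A ⊆ Icc 1 k) : {x // x ∈ tk k} :=
  ⟨⟨A, card_le_of_subset_Icc h⟩, mem_tk.mpr h⟩

abbrev Y (k : ℕ) := {x // x ∈ tk k} → I

noncomputable def π (k : ℕ) : (ι k → I) → Y k := fun x i => x i

/-- the equivalence of `tk k` induced by a permutation of ℕ stabilizing `Icc 1 k` -/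
def tEquiv {k : ℕ} (sg : ℕ ≃ ℕ) (hsg : ∀ i ∈ Icc 1 k, sg i ∈ Icc 1 k)
    (hsg' : ∀ i ∈ Icc 1 k, sg.symm i ∈ Icc 1 k) : {x // x ∈ tk k} ≃ {x // x ∈ tk k} where
  toFun a := coord (a.1.1.image sg) (by
    intro j hj
    rcases Finset.mem_image.mp hj with ⟨i, hi, rfl⟩
    exact hsg i (mem_tk.mp a.2 hi))
  invFun a := coord (a.1.1.image sg.symm) (by
    intro j hj
    rcases Finset.mem_image.mp hj with ⟨i, hi, rfl⟩
    exact hsg' i (mem_tk.mp a.2 hi))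
  left_inv a := by
    apply Subtype.ext; apply Subtype.ext
    simp [coord, Finset.image_image]
  right_inv a := by
    apply Subtype.ext; apply Subtype.ext
    simp [coord, Finset.image_image]

noncomputable def reindex {k : ℕ} (ee : {x // x ∈ tk k} ≃ {x // x ∈ tk k}) : Y k → Y k :=
  fun y i => y (ee i)

lemma measurable_reindex {k : ℕ} (ee : {x // x ∈ tk k} ≃ {x // x ∈ tk k}) :
    Measurable (reindex ee) :=
  measurable_pi_lambda _ (fun i => measurable_pi_apply _)

lemma measurePreserving_reindex {k : ℕ} (ee : {x // x ∈ tk k} ≃ {x // x ∈ tk k}) :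
    MeasurePreserving (reindex ee) (Measure.pi fun _ => (volume : Measure I))
      (Measure.pi fun _ => (volume : Measure I)) := by
  refine ⟨measurable_reindex ee, ?_⟩
  refine (Measure.pi_eq ?_).symm
  intro s hs
  rw [Measure.map_apply (measurable_reindex ee) (MeasurableSet.univ_pi hs)]
  have hpre : reindex ee ⁻¹' (Set.univ.pi s) = Set.univ.pi (fun i => s (ee.symm i)) := by
    ext y
    simp only [Set.mem_preimage, Set.mem_pi, Set.mem_univ, forall_true_left, reindex]
    constructor
    · intro h i; have h2 := h (ee.symm i); rwa [Equiv.apply_symm_apply] at h2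
    · intro h i; have h2 := h (ee i); rwa [Equiv.symm_apply_apply] at h2
  rw [hpre, Measure.pi_pi]
  exact Equiv.prod_comp ee.symm (fun i => (volume : Measure I) (s i))


abbrev Dom (k : ℕ) := {A : Finset ℕ // A ⊆ Icc 1 (k-1)}

lemma dom_sub_Icc {k : ℕ} (B : Dom k) : B.1 ⊆ Icc 1 k := by
  intro i hi
  have := B.2 hi
  simp only [mem_Icc] at *
  omega

lemma win_sub {k : ℕ} (j : ℕ) (B : Dom k) : (B.1.image ((cyc k)^[j])) ⊆ Icc 1 k := by
  intro i hi
  rcases Finset.mem_image.mp hi with ⟨m, hm, rfl⟩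
  exact cyc_iter_mem k j (dom_sub_Icc B hm)

noncomputable def win (k j : ℕ) : Y k → (Dom k → I) :=
  fun y B => y (coord (B.1.image ((cyc k)^[j])) (win_sub j B))

lemma measurable_win (k j : ℕ) : Measurable (win k j) :=
  measurable_pi_lambda _ (fun B => measurable_pi_apply _)

lemma coord_congr {k : ℕ} {A B : Finset ℕ} {hA : A ⊆ Icc 1 k} {hB : B ⊆ Icc 1 k}
    (h : A = B) : coord A hA = coord B hB := by subst h; rfl

def Sev (k : ℕ) (f : (Dom k → I) → I) (j : ℕ) : Set (Y k) :=
  {y | f (win k (j+1) y) < f (win k j y)}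

lemma measurableSet_Sev {k : ℕ} {f : (Dom k → I) → I} (hf : Measurable f) (j : ℕ) :
    MeasurableSet (Sev k f j) := by
  have h : Sev k f j =
      {y : Y k | ((f (win k (j+1) y) : ℝ)) < ((f (win k j y)) : ℝ)} := by
    ext y; simp [Sev]
  rw [h]
  exact measurableSet_lt
    (measurable_subtype_coe.comp (hf.comp (measurable_win _ _)))
    (measurable_subtype_coe.comp (hf.comp (measurable_win _ _)))

def cycT (k : ℕ) (hk : 1 ≤ k) : {x // x ∈ tk k} ≃ {x // x ∈ tk k} :=
  tEquiv (cycE k hk) (fun i hi => cyc_mem k hi) (fun i hi => cycInv_mem k hi)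

lemma win_reindex {k : ℕ} (hk : 1 ≤ k) (j : ℕ) (y : Y k) :
    win k j (reindex (cycT k hk) y) = win k (j+1) y := by
  funext B
  show y ((cycT k hk) (coord (B.1.image ((cyc k)^[j])) (win_sub j B))) = _
  have h : (cycT k hk) (coord (B.1.image ((cyc k)^[j])) (win_sub j B)) =
      coord (B.1.image ((cyc k)^[j+1])) (win_sub (j+1) B) := by
    apply Subtype.ext; apply Subtype.ext
    show ((B.1.image ((cyc k)^[j])).image (cyc k)) = B.1.image ((cyc k)^[j+1])
    rw [Finset.image_image, Function.iterate_succ']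
  rw [h]
  rfl

lemma Sev_reindex {k : ℕ} (hk : 1 ≤ k) (f : (Dom k → I) → I) (j : ℕ) :
    reindex (cycT k hk) ⁻¹' (Sev k f j) = Sev k f (j+1) := by
  ext y
  simp only [Set.mem_preimage, Sev, Set.mem_setOf_eq, win_reindex hk]

section withMeasure

variable {k : ℕ} (μ : Measure (ι k → I)) [IsProbabilityMeasure μ]
  (hμ : ∀ t : Finset (ι k),
      Measure.map (fun x (i : t) => x i) μ = Measure.pi fun _ : t => (volume : Measure I))

lemma measurable_π (k : ℕ) : Measurable (π k) :=
  measurable_pi_lambda _ (fun i => measurable_pi_apply _)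

include hμ

lemma mu_pre {S : Set (Y k)} (hS : MeasurableSet S) :
    μ (π k ⁻¹' S) = Measure.pi (fun _ : {x // x ∈ tk k} => (volume : Measure I)) S := by
  have h : Measure.map (π k) μ = Measure.pi (fun _ : {x // x ∈ tk k} => (volume : Measure I)) :=
    hμ (tk k)
  rw [← h, Measure.map_apply (measurable_π k) hS]

lemma mu_reindex (ee : {x // x ∈ tk k} ≃ {x // x ∈ tk k}) {S : Set (Y k)}
    (hS : MeasurableSet S) :
    μ (π k ⁻¹' (reindex ee ⁻¹' S)) = μ (π k ⁻¹' S) := by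
  rw [mu_pre μ hμ ((measurable_reindex ee) hS), mu_pre μ hμ hS]
  exact (measurePreserving_reindex ee).measure_preimage hS.nullMeasurableSet

end withMeasure

section upperBound

variable {k : ℕ} (μ : Measure (ι k → I)) [IsProbabilityMeasure μ]
  (hμ : ∀ t : Finset (ι k),
      Measure.map (fun x (i : t) => x i) μ = Measure.pi fun _ : t => (volume : Measure I))

include hμ

lemma mu_Sev_const (hk : 1 ≤ k) {f : (Dom k → I) → I} (hf : Measurable f) (j : ℕ) :
    μ (π k ⁻¹' Sev k f j) = μ (π k ⁻¹' Sev k f 0) := by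
  induction j with
  | zero => rfl
  | succ n ih =>
    rw [← Sev_reindex hk f n, mu_reindex μ hμ _ (measurableSet_Sev hf n)]
    exact ih

omit hμ in
lemma win_k_eq_zero (hk : 1 ≤ k) (y : Y k) : win k k y = win k 0 y := by
  funext B
  show y (coord (B.1.image ((cyc k)^[k])) (win_sub k B)) =
    y (coord (B.1.image ((cyc k)^[0])) (win_sub 0 B))
  congr 1
  apply coord_congr
  have h : B.1.image ((cyc k)^[k]) = B.1 := by
    ext i
    simp only [Finset.mem_image]
    constructor
    · rintro ⟨m, hm, rfl⟩; rwa [cyc_iter_k k (dom_sub_Icc B hm)]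
    · intro hi; exact ⟨i, hi, cyc_iter_k k (dom_sub_Icc B hi)⟩
  rw [h, Function.iterate_zero, Finset.image_id]

omit hμ in
lemma iInter_Sev_empty (hk : 1 ≤ k) (f : (Dom k → I) → I) :
    (⋂ j ∈ Finset.range k, (π k ⁻¹' Sev k f j)) = ∅ := by
  ext x
  simp only [Set.mem_iInter, Set.mem_empty_iff_false, iff_false, Finset.mem_range]
  intro hx
  have hchain : ∀ j, j < k → f (win k (j+1) (π k x)) < f (win k j (π k x)) := by
    intro j hj; exact hx j hj
  have hlt : ∀ j, j ≤ k → 1 ≤ j → f (win k j (π k x)) < f (win k 0 (π k x)) := by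
    intro j
    induction j with
    | zero => omega
    | succ n ih =>
      intro hn _
      rcases Nat.eq_zero_or_pos n with rfl | hpos
      · exact hchain 0 (by omega)
      · exact lt_trans (hchain n (by omega)) (ih (by omega) hpos)
  have := hlt k le_rfl hk
  rw [win_k_eq_zero hk] at this
  exact lt_irrefl _ this

theorem upper_bound (hk : 2 ≤ k) {f : (Dom k → I) → I} (hf : Measurable f) :
    μ (π k ⁻¹' Sev k f 0) ≤ 1 - 1 / (k : ℝ≥0∞) := by
  have hk1 : 1 ≤ k := by omega
  set E : ℕ → Set (ι k → I) := fun j => π k ⁻¹' Sev k f j with hE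
  have hEm : ∀ j, MeasurableSet (E j) := fun j => (measurable_π k) (measurableSet_Sev hf j)
  have h1 : (1 : ℝ≥0∞) ≤ (k : ℝ≥0∞) * μ (E 0)ᶜ := by
    have hunion : (⋃ j ∈ Finset.range k, (E j)ᶜ) = Set.univ := by
      rw [← Set.compl_iInter₂, iInter_Sev_empty hk1 f, Set.compl_empty]
    have hle : μ (⋃ j ∈ Finset.range k, (E j)ᶜ) ≤ ∑ j ∈ Finset.range k, μ (E j)ᶜ :=
      measure_biUnion_finset_le _ _
    rw [hunion, measure_univ] at hle
    have hconst : ∀ j ∈ Finset.range k, μ (E j)ᶜ = μ (E 0)ᶜ := by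
      intro j _
      rw [prob_compl_eq_one_sub (hEm j), prob_compl_eq_one_sub (hEm 0),
        mu_Sev_const μ hμ hk1 hf j]
    rw [Finset.sum_congr rfl hconst, Finset.sum_const, Finset.card_range] at hle
    simpa [nsmul_eq_mul] using hle
  have hinv : 1 / (k : ℝ≥0∞) ≤ μ (E 0)ᶜ := by
    rw [ENNReal.div_le_iff_le_mul (Or.inl (by exact_mod_cast (by omega : k ≠ 0)))
      (Or.inl (ENNReal.natCast_ne_top k))]
    calc (1:ℝ≥0∞) ≤ (k : ℝ≥0∞) * μ (E 0)ᶜ := h1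
    _ = μ (E 0)ᶜ * k := mul_comm _ _
  have hsplit : μ (E 0) + μ (E 0)ᶜ = 1 := prob_add_prob_compl (hEm 0)
  have : μ (E 0) + 1 / (k : ℝ≥0∞) ≤ 1 := by
    calc μ (E 0) + 1 / (k : ℝ≥0∞) ≤ μ (E 0) + μ (E 0)ᶜ := by
          exact add_le_add (le_refl _) hinv
    _ = 1 := hsplit
  have hkne : (k:ℝ≥0∞) ≠ 0 := by exact_mod_cast (by omega : k ≠ 0)
  exact ENNReal.le_sub_of_add_le_right (by simp [ENNReal.div_eq_top, hkne]) this

end upperBound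

/-! ### The lower-bound construction -/

noncomputable def lvl (n : ℕ) (x : I) : ℕ := min (⌊(n : ℝ) * (x : ℝ)⌋₊) (n - 1)

lemma lvl_le (n : ℕ) (x : I) : lvl n x ≤ n - 1 := min_le_right _ _

lemma lvl_mono (n : ℕ) {x y : I} (h : (x:ℝ) ≤ (y:ℝ)) : lvl n x ≤ lvl n y := by
  apply min_le_min_right
  exact Nat.floor_mono (by nlinarith [x.2.1])

lemma measurable_lvl (n : ℕ) : Measurable (lvl n) := by
  apply Measurable.min _ measurable_const
  exact Nat.measurable_floor.comp (measurable_const.mul measurable_subtype_coe)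

lemma lvl_lower (n : ℕ) (x : I) : ((lvl n x : ℝ)) / n ≤ (x : ℝ) := by
  rcases Nat.eq_zero_or_pos n with rfl | hn
  · simp [lvl]; exact x.2.1
  have h1 : (lvl n x : ℝ) ≤ ⌊(n : ℝ) * (x : ℝ)⌋₊ := by
    exact_mod_cast min_le_left _ _
  have h2 : (⌊(n : ℝ) * (x : ℝ)⌋₊ : ℝ) ≤ (n : ℝ) * (x : ℝ) :=
    Nat.floor_le (mul_nonneg (by positivity) x.2.1)
  rw [div_le_iff₀ (by exact_mod_cast hn)]
  nlinarith

lemma lvl_upper (n : ℕ) (hn : 1 ≤ n) (x : I) : (x : ℝ) ≤ ((lvl n x : ℝ) + 1) / n := by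
  have hnR : (0:ℝ) < n := by exact_mod_cast hn
  rw [le_div_iff₀ hnR]
  by_cases h : ⌊(n : ℝ) * (x : ℝ)⌋₊ ≤ n - 1
  · have : lvl n x = ⌊(n : ℝ) * (x : ℝ)⌋₊ := min_eq_left h
    rw [this]
    have := Nat.lt_floor_add_one ((n : ℝ) * (x : ℝ))
    nlinarith
  · have hl : lvl n x = n - 1 := min_eq_right (by omega)
    rw [hl]
    have hx1 : (x : ℝ) ≤ 1 := x.2.2
    have : ((n - 1 : ℕ) : ℝ) = (n : ℝ) - 1 := by
      have : (1:ℕ) ≤ n := hn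
      push_cast [Nat.cast_sub this]
      ring
    rw [this]
    nlinarith

def sing {k : ℕ} (i : ℕ) (h : i ∈ Icc 1 (k-1)) : Dom k :=
  ⟨{i}, by simpa [Finset.singleton_subset_iff] using h⟩

noncomputable def qfun (k n : ℕ) (y : Dom k → I) : ℕ :=
  (Icc 1 (k-1)).attach.sup (fun i => lvl n (y (sing i.1 i.2)))

open Classical in
noncomputable def pfun (k : ℕ) (y : Dom k → I) : ℕ :=
  (Icc 1 (k-1)).attach.sup (fun i =>
    if (∀ j ∈ (Icc 1 (k-1)).attach, ((y (sing j.1 j.2) : ℝ)) ≤ ((y (sing i.1 i.2)) : ℝ))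
    then i.1 else 0)

lemma qfun_le (k n : ℕ) (y : Dom k → I) : qfun k n y ≤ n - 1 :=
  Finset.sup_le (fun i _ => lvl_le n _)

lemma pfun_le (k : ℕ) (y : Dom k → I) : pfun k y ≤ k - 1 := by
  apply Finset.sup_le
  intro i _
  split_ifs
  · exact (mem_Icc.mp i.2).2
  · omega

noncomputable def fL (k n : ℕ) (y : Dom k → I) : I :=
  ⟨((k * (n - 1 - qfun k n y) + pfun k y : ℕ) : ℝ) / ((n * k : ℕ) : ℝ), by
    constructor
    · apply div_nonneg <;> positivity
    · rcases Nat.eq_zero_or_pos (n * k) with h | h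
      · simp [h]
      rw [div_le_one (by exact_mod_cast h)]
      have h1 : k * (n - 1 - qfun k n y) + pfun k y ≤ n * k - 1 := by
        have h2 := pfun_le k y
        have h3 : n - 1 - qfun k n y ≤ n - 1 := by omega
        have h4 : k * (n - 1 - qfun k n y) ≤ k * (n - 1) := Nat.mul_le_mul_left k h3
        have h5 : k * (n-1) + (k-1) ≤ n * k - 1 := by
          have hk1 : 1 ≤ k := by by_contra hc; simp at hc; subst hc; simp at h
          have hn1 : 1 ≤ n := by by_contra hc; simp at hc; subst hc; simp at h
          have h6 : k * (n-1) + k = k * n := by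
            rw [← Nat.mul_succ]; congr 1; omega
          have h7 : k * n = n * k := Nat.mul_comm k n
          omega
        omega
      exact_mod_cast le_trans h1 (Nat.sub_le _ _)⟩

lemma measurable_coord_eval {k : ℕ} (B : Dom k) :
    Measurable (fun y : Dom k → I => y B) := measurable_pi_apply B

lemma measurable_sup_nat {α : Type*} [MeasurableSpace α] {β : Type*} [DecidableEq β]
    (s : Finset β) (g : β → α → ℕ) (hg : ∀ b, Measurable (g b)) :
    Measurable (fun a => s.sup (fun b => g b a)) := by
  induction s using Finset.induction_on with
  | empty => simpa using measurable_const
  | insert _ _ hb ih =>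
    simp only [Finset.sup_insert]
    exact (hg _).sup ih

lemma measurable_qfun (k n : ℕ) : Measurable (qfun k n) := by
  apply measurable_sup_nat
  intro b
  exact (measurable_lvl n).comp (measurable_pi_apply _)

lemma measurable_pfun (k : ℕ) : Measurable (pfun k) := by
  apply measurable_sup_nat
  intro i
  apply Measurable.ite _ measurable_const measurable_const
  have : {y : Dom k → I | ∀ j ∈ (Icc 1 (k-1)).attach,
      ((y (sing j.1 j.2) : ℝ)) ≤ ((y (sing i.1 i.2)) : ℝ)} =
      ⋂ j ∈ (Icc 1 (k-1)).attach, {y : Dom k → I |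
        ((y (sing j.1 j.2) : ℝ)) ≤ ((y (sing i.1 i.2)) : ℝ)} := by
    ext y; simp
  rw [this]
  apply MeasurableSet.biInter (Set.to_countable _)
  intro j _
  exact measurableSet_le (measurable_subtype_coe.comp (measurable_pi_apply _))
    (measurable_subtype_coe.comp (measurable_pi_apply _))

lemma measurable_fL (k n : ℕ) : Measurable (fL k n) := by
  apply Measurable.subtype_mk
  apply Measurable.div_const
  have h1 : Measurable (fun y => (k * (n - 1 - qfun k n y) + pfun k y : ℕ)) := by
    apply Measurable.add
    · exact (measurable_const.sub (measurable_qfun k n)).const_mul k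
    · exact measurable_pfun k
  exact (measurable_from_top (f := (Nat.cast : ℕ → ℝ))).comp h1

lemma natkey_lt {k n q q' p p' : ℕ} (hk : 1 ≤ k) (hn : 1 ≤ n) (hq' : q' ≤ n-1)
    (hp : p ≤ k-1) (hp' : p' ≤ k-1) (h : q < q' ∨ (q = q' ∧ p' < p)) :
    k*(n-1-q') + p' < k*(n-1-q) + p := by
  rcases h with h | ⟨rfl, h⟩
  · have h3 : (n-1-q') + 1 ≤ n-1-q := by omega
    have h4 := Nat.mul_le_mul_left k h3
    rw [Nat.mul_add, Nat.mul_one] at h4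
    omega
  · omega

lemma fL_lt {k n : ℕ} (hk : 1 ≤ k) (hn : 1 ≤ n) {y y' : Dom k → I}
    (h : qfun k n y < qfun k n y' ∨
      (qfun k n y = qfun k n y' ∧ pfun k y' < pfun k y)) :
    fL k n y' < fL k n y := by
  have key := natkey_lt (q := qfun k n y) (q' := qfun k n y') (p := pfun k y)
    (p' := pfun k y') hk hn (qfun_le k n y') (pfun_le k y) (pfun_le k y') h
  have hpos : (0:ℝ) < ((n * k : ℕ) : ℝ) := by
    have : 0 < n * k := Nat.mul_pos hn hk
    exact_mod_cast this
  rw [← Subtype.coe_lt_coe]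
  show ((k * (n - 1 - qfun k n y') + pfun k y' : ℕ) : ℝ) / ((n * k : ℕ) : ℝ) <
    ((k * (n - 1 - qfun k n y) + pfun k y : ℕ) : ℝ) / ((n * k : ℕ) : ℝ)
  rw [div_lt_div_iff_of_pos_right hpos, Nat.cast_lt]
  exact key

def coordSing (k i : ℕ) (h : i ∈ Icc 1 k) : {x // x ∈ tk k} :=
  coord {i} (by simpa [Finset.singleton_subset_iff] using h)

lemma coordSing_congr {k : ℕ} {i j : ℕ} {hi : i ∈ Icc 1 k} {hj : j ∈ Icc 1 k}
    (h : i = j) : coordSing k i hi = coordSing k j hj := by subst h; rfl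

lemma mem_Icc_up {k i : ℕ} (h : i ∈ Icc 1 (k-1)) : i ∈ Icc 1 k := by
  simp only [mem_Icc] at *; omega

lemma mem_Icc_succ {k i : ℕ} (h : i ∈ Icc 1 (k-1)) : i + 1 ∈ Icc 1 k := by
  simp only [mem_Icc] at *; omega

lemma win_zero_sing {k : ℕ} (y : Y k) (i : ℕ) (hi : i ∈ Icc 1 (k-1)) :
    win k 0 y (sing i hi) = y (coordSing k i (mem_Icc_up hi)) := by
  show y (coord (({i} : Finset ℕ).image ((cyc k)^[0])) _) = _
  exact congrArg y (coord_congr (by simp))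

lemma win_one_sing {k : ℕ} (hk : 2 ≤ k) (y : Y k) (i : ℕ) (hi : i ∈ Icc 1 (k-1)) :
    win k 1 y (sing i hi) = y (coordSing k (i+1) (mem_Icc_succ hi)) := by
  show y (coord (({i} : Finset ℕ).image ((cyc k)^[1])) _) = _
  refine congrArg y (coord_congr ?_)
  rw [Function.iterate_one, Finset.image_singleton,
    cyc_eq_succ k (mem_Icc.mp hi).1 (mem_Icc.mp hi).2 hk]

def Smax (k : ℕ) (i : ℕ) (h : i ∈ Icc 1 k) : Set (Y k) :=
  {y | ∀ j, (hj : j ∈ Icc 1 k) → j ≠ i →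
    ((y (coordSing k j hj)) : ℝ) < ((y (coordSing k i h)) : ℝ)}

lemma measurableSet_Smax (k i : ℕ) (h : i ∈ Icc 1 k) : MeasurableSet (Smax k i h) := by
  have : Smax k i h = ⋂ (j : ℕ), ⋂ (hj : j ∈ Icc 1 k), ⋂ (_ : j ≠ i),
      {y : Y k | ((y (coordSing k j hj)) : ℝ) < ((y (coordSing k i h)) : ℝ)} := by
    ext y; simp [Smax]
  rw [this]
  refine MeasurableSet.iInter fun j => MeasurableSet.iInter fun hj =>
    MeasurableSet.iInter fun _ => ?_
  exact measurableSet_lt (measurable_subtype_coe.comp (measurable_pi_apply _))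
    (measurable_subtype_coe.comp (measurable_pi_apply _))

def Box (k n : ℕ) (a b : {x // x ∈ tk k}) (l : ℕ) : Set (Y k) :=
  {y | lvl n (y a) = l ∧ lvl n (y b) = l}

lemma measurableSet_Box (k n : ℕ) (a b : {x // x ∈ tk k}) (l : ℕ) :
    MeasurableSet (Box k n a b l) := by
  apply MeasurableSet.inter
  · exact ((measurable_lvl n).comp (measurable_pi_apply a)) (MeasurableSet.singleton l)
  · exact ((measurable_lvl n).comp (measurable_pi_apply b)) (MeasurableSet.singleton l)

lemma volume_lvl_le (n : ℕ) (hn : 1 ≤ n) (l : ℕ) :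
    (volume : Measure I) (lvl n ⁻¹' {l}) ≤ ENNReal.ofReal (1/n) := by
  have hemb : MeasurableEmbedding (Subtype.val : I → ℝ) :=
    MeasurableEmbedding.subtype_coe measurableSet_Icc
  rw [unitInterval.volume_def, MeasurableEmbedding.comap_apply hemb]
  have hsub : (Subtype.val '' (lvl n ⁻¹' {l})) ⊆ Set.Icc ((l:ℝ)/n) ((l+1:ℝ)/n) := by
    rintro x ⟨z, hz, rfl⟩
    simp only [Set.mem_preimage, Set.mem_singleton_iff] at hz
    constructor
    · have := lvl_lower n z; rw [hz] at this; exact this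
    · have := lvl_upper n hn z; rw [hz] at this
      exact_mod_cast this
  calc volume (Subtype.val '' (lvl n ⁻¹' {l})) ≤ volume (Set.Icc ((l:ℝ)/n) ((l+1:ℝ)/n)) :=
        measure_mono hsub
  _ = ENNReal.ofReal ((l+1:ℝ)/n - (l:ℝ)/n) := Real.volume_Icc
  _ = ENNReal.ofReal (1/n) := by congr 1; field_simp; ring

lemma pi_Box_le {k n : ℕ} (hn : 1 ≤ n) {a b : {x // x ∈ tk k}} (hab : a ≠ b) (l : ℕ) :
    Measure.pi (fun _ : {x // x ∈ tk k} => (volume : Measure I)) (Box k n a b l) ≤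
      ENNReal.ofReal (1/n) * ENNReal.ofReal (1/n) := by
  classical
  set L : Set I := lvl n ⁻¹' {l} with hL
  have hLm : MeasurableSet L := (measurable_lvl n) (MeasurableSet.singleton l)
  set B : {x // x ∈ tk k} → Set I := fun m => if m = a then L else if m = b then L else Set.univ
    with hB
  have hBm : ∀ m, MeasurableSet (B m) := by
    intro m
    show MeasurableSet (if m = a then L else if m = b then L else Set.univ)
    split_ifs <;> first | exact hLm | exact MeasurableSet.univ
  have hbox : Box k n a b l = Set.univ.pi B := by
    ext y
    simp only [Box, Set.mem_setOf_eq, Set.mem_pi, Set.mem_univ, forall_true_left, hB]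
    constructor
    · rintro ⟨h1, h2⟩ m
      show y m ∈ (if m = a then L else if m = b then L else Set.univ)
      split_ifs with e1 e2
      · subst e1; exact h1
      · subst e2; exact h2
      · trivial
    · intro h
      constructor
      · have h2 := h a
        rw [if_pos rfl] at h2
        exact h2
      · have h2 := h b
        rw [if_neg (Ne.symm hab), if_pos rfl] at h2
        exact h2
  rw [hbox, Measure.pi_pi]
  have h1 : ∏ m : {x // x ∈ tk k}, (volume : Measure I) (B m) =
      (volume : Measure I) (B a) * ((volume : Measure I) (B b) *
        ∏ m ∈ ((Finset.univ.erase a).erase b), (volume : Measure I) (B m)) := by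
    rw [← Finset.mul_prod_erase _ _ (Finset.mem_univ a),
      ← Finset.mul_prod_erase _ _ (Finset.mem_erase.mpr ⟨Ne.symm hab, Finset.mem_univ b⟩)]
  rw [h1]
  have hBa : B a = L := by simp [hB]
  have hBb : B b = L := by simp [hB, Ne.symm hab]
  have hrest : ∏ m ∈ ((Finset.univ.erase a).erase b), (volume : Measure I) (B m) = 1 := by
    apply Finset.prod_eq_one
    intro m hm
    rcases Finset.mem_erase.mp hm with ⟨hmb, hm2⟩
    rcases Finset.mem_erase.mp hm2 with ⟨hma, _⟩
    simp [hB, hma, hmb]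
  rw [hBa, hBb, hrest, mul_one]
  exact mul_le_mul' (volume_lvl_le n hn l) (volume_lvl_le n hn l)

lemma qfun_win0 {k n : ℕ} (y : Y k) (m : ℕ) (hmW : m ∈ Icc 1 (k-1))
    (hy : y ∈ Smax k m (mem_Icc_up hmW)) :
    qfun k n (win k 0 y) = lvl n (y (coordSing k m (mem_Icc_up hmW))) := by
  apply le_antisymm
  · apply Finset.sup_le
    intro i _
    rw [win_zero_sing y i.1 i.2]
    rcases eq_or_ne i.1 m with he | hne
    · rw [coordSing_congr (hj := mem_Icc_up hmW) he]
    · exact lvl_mono n (le_of_lt (hy i.1 (mem_Icc_up i.2) hne))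
  · have h := Finset.le_sup
      (f := fun i : {x // x ∈ Icc 1 (k-1)} => lvl n ((win k 0 y) (sing i.1 i.2)))
      (Finset.mem_attach _ (⟨m, hmW⟩ : {x // x ∈ Icc 1 (k-1)}))
    replace h : lvl n ((win k 0 y) (sing m hmW)) ≤ qfun k n (win k 0 y) := h
    rw [win_zero_sing y m hmW] at h
    exact h

lemma qfun_win1 {k n : ℕ} (hk : 2 ≤ k) (y : Y k) (m : ℕ) (hm2 : 2 ≤ m) (hmk : m ≤ k)
    (hmI : m ∈ Icc 1 k) (hy : y ∈ Smax k m hmI) :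
    qfun k n (win k 1 y) = lvl n (y (coordSing k m hmI)) := by
  have hmW' : m - 1 ∈ Icc 1 (k-1) := by simp only [mem_Icc]; omega
  apply le_antisymm
  · apply Finset.sup_le
    intro i _
    rw [win_one_sing hk y i.1 i.2]
    rcases eq_or_ne (i.1 + 1) m with he | hne
    · rw [coordSing_congr (hj := hmI) he]
    · exact lvl_mono n (le_of_lt (hy (i.1+1) (mem_Icc_succ i.2) hne))
  · have h := Finset.le_sup
      (f := fun i : {x // x ∈ Icc 1 (k-1)} => lvl n ((win k 1 y) (sing i.1 i.2)))
      (Finset.mem_attach _ (⟨m-1, hmW'⟩ : {x // x ∈ Icc 1 (k-1)}))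
    replace h : lvl n ((win k 1 y) (sing (m-1) hmW')) ≤ qfun k n (win k 1 y) := h
    rw [win_one_sing hk y (m-1) hmW', coordSing_congr (show m-1+1 = m by omega)] at h
    exact h

lemma pfun_win0 {k : ℕ} (y : Y k) (m : ℕ) (hmW : m ∈ Icc 1 (k-1))
    (hy : y ∈ Smax k m (mem_Icc_up hmW)) :
    pfun k (win k 0 y) = m := by
  apply le_antisymm
  · apply Finset.sup_le
    intro i _
    split_ifs with hc
    · rcases eq_or_ne i.1 m with he | hne
      · exact le_of_eq he
      · exfalso
        have h1 := hy i.1 (mem_Icc_up i.2) hne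
        have h2 := hc (⟨m, hmW⟩ : {x // x ∈ Icc 1 (k-1)}) (Finset.mem_attach _ _)
        rw [win_zero_sing y m hmW, win_zero_sing y i.1 i.2] at h2
        linarith
    · exact Nat.zero_le m
  · have hcond : ∀ j ∈ (Icc 1 (k-1)).attach,
        (((win k 0 y) (sing j.1 j.2) : ℝ)) ≤ (((win k 0 y) (sing m hmW)) : ℝ) := by
      intro j _
      rw [win_zero_sing y j.1 j.2, win_zero_sing y m hmW]
      rcases eq_or_ne j.1 m with he | hne
      · rw [coordSing_congr (hj := mem_Icc_up hmW) he]
      · exact le_of_lt (hy j.1 (mem_Icc_up j.2) hne)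
    have h := Finset.le_sup
      (f := fun i : {x // x ∈ Icc 1 (k-1)} =>
        if (∀ j ∈ (Icc 1 (k-1)).attach,
          (((win k 0 y) (sing j.1 j.2) : ℝ)) ≤ (((win k 0 y) (sing i.1 i.2)) : ℝ))
        then i.1 else 0)
      (Finset.mem_attach _ (⟨m, hmW⟩ : {x // x ∈ Icc 1 (k-1)}))
    replace h : (if (∀ j ∈ (Icc 1 (k-1)).attach,
          (((win k 0 y) (sing j.1 j.2) : ℝ)) ≤ (((win k 0 y) (sing m hmW)) : ℝ))
        then m else 0) ≤ pfun k (win k 0 y) := h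
    rw [if_pos hcond] at h
    exact h

lemma pfun_win1 {k : ℕ} (hk : 2 ≤ k) (y : Y k) (m : ℕ) (hm2 : 2 ≤ m) (hmk : m ≤ k)
    (hmI : m ∈ Icc 1 k) (hy : y ∈ Smax k m hmI) :
    pfun k (win k 1 y) = m - 1 := by
  have hmW' : m - 1 ∈ Icc 1 (k-1) := by simp only [mem_Icc]; omega
  apply le_antisymm
  · apply Finset.sup_le
    intro i _
    split_ifs with hc
    · rcases eq_or_ne (i.1+1) m with he | hne
      · have := i.2; simp only [mem_Icc] at this; omega
      · exfalso
        have h1 := hy (i.1+1) (mem_Icc_succ i.2) hne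
        have h2 := hc (⟨m-1, hmW'⟩ : {x // x ∈ Icc 1 (k-1)}) (Finset.mem_attach _ _)
        rw [win_one_sing hk y (m-1) hmW', win_one_sing hk y i.1 i.2,
          coordSing_congr (hj := hmI) (show m-1+1 = m by omega)] at h2
        linarith
    · exact Nat.zero_le _
  · have hcond : ∀ j ∈ (Icc 1 (k-1)).attach,
        (((win k 1 y) (sing j.1 j.2) : ℝ)) ≤ (((win k 1 y) (sing (m-1) hmW')) : ℝ) := by
      intro j _
      rw [win_one_sing hk y j.1 j.2, win_one_sing hk y (m-1) hmW',
        coordSing_congr (hj := hmI) (show m-1+1 = m by omega)]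
      rcases eq_or_ne (j.1+1) m with he | hne
      · rw [coordSing_congr (hj := hmI) he]
      · exact le_of_lt (hy (j.1+1) (mem_Icc_succ j.2) hne)
    have h := Finset.le_sup
      (f := fun i : {x // x ∈ Icc 1 (k-1)} =>
        if (∀ j ∈ (Icc 1 (k-1)).attach,
          (((win k 1 y) (sing j.1 j.2) : ℝ)) ≤ (((win k 1 y) (sing i.1 i.2)) : ℝ))
        then i.1 else 0)
      (Finset.mem_attach _ (⟨m-1, hmW'⟩ : {x // x ∈ Icc 1 (k-1)}))
    replace h : (if (∀ j ∈ (Icc 1 (k-1)).attach,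
          (((win k 1 y) (sing j.1 j.2) : ℝ)) ≤ (((win k 1 y) (sing (m-1) hmW')) : ℝ))
        then m-1 else 0) ≤ pfun k (win k 1 y) := h
    rw [if_pos hcond] at h
    exact h

lemma Smax_interior_subset_Sev {k n : ℕ} (hk : 2 ≤ k) (hn : 1 ≤ n) (m : ℕ)
    (hm2 : 2 ≤ m) (hmk : m ≤ k - 1) (hmI : m ∈ Icc 1 k) :
    Smax k m hmI ⊆ Sev k (fL k n) 0 := by
  intro y hy
  have hmW : m ∈ Icc 1 (k-1) := by simp only [mem_Icc]; omega
  have hy' : y ∈ Smax k m (mem_Icc_up hmW) := hy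
  show fL k n (win k 1 y) < fL k n (win k 0 y)
  apply fL_lt (by omega : 1 ≤ k) hn
  refine Or.inr ⟨?_, ?_⟩
  · rw [qfun_win0 y m hmW hy', qfun_win1 hk y m hm2 (by omega) (mem_Icc_up hmW) hy']
  · rw [pfun_win0 y m hmW hy', pfun_win1 hk y m hm2 (by omega) (mem_Icc_up hmW) hy']
    omega

def BadSet (k n : ℕ) (hkI : k ∈ Icc 1 k) : Set (Y k) :=
  ⋃ i ∈ (Icc 1 (k-1)).attach, ⋃ l ∈ Finset.range n,
    Box k n (coordSing k i.1 (mem_Icc_up i.2)) (coordSing k k hkI) l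

lemma Smax_k_subset_Sev {k n : ℕ} (hk : 2 ≤ k) (hn : 1 ≤ n) (hkI : k ∈ Icc 1 k) :
    Smax k k hkI \ BadSet k n hkI ⊆ Sev k (fL k n) 0 := by
  rintro y ⟨hy, hnb⟩
  simp only [BadSet, Set.mem_iUnion, not_exists, Set.mem_setOf_eq] at hnb
  have hlt : ∀ i (hi : i ∈ Icc 1 (k-1)),
      lvl n (y (coordSing k i (mem_Icc_up hi))) < lvl n (y (coordSing k k hkI)) := by
    intro i hi
    have hik : i ≠ k := by have := mem_Icc.mp hi; omega
    have hle := lvl_mono n (le_of_lt (hy i (mem_Icc_up hi) hik))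
    have hne : lvl n (y (coordSing k i (mem_Icc_up hi))) ≠ lvl n (y (coordSing k k hkI)) := by
      intro he
      have hrange : lvl n (y (coordSing k k hkI)) ∈ Finset.range n := by
        simp only [Finset.mem_range]
        have := lvl_le n (y (coordSing k k hkI))
        omega
      exact hnb ⟨i, hi⟩ (Finset.mem_attach _ _) (lvl n (y (coordSing k k hkI))) hrange ⟨he, rfl⟩
    omega
  show fL k n (win k 1 y) < fL k n (win k 0 y)
  apply fL_lt (by omega : 1 ≤ k) hn
  left
  rw [qfun_win1 hk y k hk le_rfl hkI hy]
  have hbot : (0:ℕ) < lvl n (y (coordSing k k hkI)) := by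
    have h1 := hlt 1 (by simp only [mem_Icc]; omega)
    omega
  rw [show qfun k n (win k 0 y) = (Icc 1 (k-1)).attach.sup
      (fun i => lvl n ((win k 0 y) (sing i.1 i.2))) from rfl]
  rw [Finset.sup_lt_iff hbot]
  intro i _
  rw [win_zero_sing y i.1 i.2]
  exact hlt i.1 i.2

/-! ### symmetry, ties, and measures of the Smax events -/

lemma swap_mem_Icc {k i i' : ℕ} (hi : i ∈ Icc 1 k) (hi' : i' ∈ Icc 1 k) :
    ∀ j ∈ Icc 1 k, (Equiv.swap i i') j ∈ Icc 1 k := by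
  intro j hj
  rcases eq_or_ne j i with rfl | h1
  · rwa [Equiv.swap_apply_left]
  rcases eq_or_ne j i' with rfl | h2
  · rwa [Equiv.swap_apply_right]
  · rwa [Equiv.swap_apply_of_ne_of_ne h1 h2]

def swapT (k : ℕ) {i i' : ℕ} (hi : i ∈ Icc 1 k) (hi' : i' ∈ Icc 1 k) :
    {x // x ∈ tk k} ≃ {x // x ∈ tk k} :=
  tEquiv (Equiv.swap i i') (swap_mem_Icc hi hi')
    (by rw [Equiv.symm_swap]; exact swap_mem_Icc hi hi')

lemma reindex_tEquiv_coordSing {k : ℕ} (sg : ℕ ≃ ℕ)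
    (hsg : ∀ i ∈ Icc 1 k, sg i ∈ Icc 1 k) (hsg' : ∀ i ∈ Icc 1 k, sg.symm i ∈ Icc 1 k)
    (y : Y k) (j : ℕ) (hj : j ∈ Icc 1 k) :
    reindex (tEquiv sg hsg hsg') y (coordSing k j hj) =
      y (coordSing k (sg j) (hsg j hj)) := by
  refine congrArg y ?_
  apply Subtype.ext; apply Subtype.ext
  show ({j} : Finset ℕ).image sg = {sg j}
  exact Finset.image_singleton sg j

lemma reindex_swapT_coordSing {k : ℕ} {i i' : ℕ} (hi : i ∈ Icc 1 k) (hi' : i' ∈ Icc 1 k)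
    (y : Y k) (j : ℕ) (hj : j ∈ Icc 1 k) :
    reindex (swapT k hi hi') y (coordSing k j hj) =
      y (coordSing k ((Equiv.swap i i') j) (swap_mem_Icc hi hi' j hj)) :=
  reindex_tEquiv_coordSing _ _ _ y j hj

lemma reindex_swap_Smax {k i i' : ℕ} (hi : i ∈ Icc 1 k) (hi' : i' ∈ Icc 1 k) :
    reindex (swapT k hi hi') ⁻¹' (Smax k i' hi') = Smax k i hi := by
  ext y
  simp only [Set.mem_preimage]
  constructor
  · intro hy j hj hne
    have hswj : (Equiv.swap i i') j ∈ Icc 1 k := swap_mem_Icc hi hi' j hj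
    have hne' : (Equiv.swap i i') j ≠ i' := by
      intro he
      apply hne
      have := congrArg (Equiv.swap i i') he
      rwa [Equiv.swap_apply_self, Equiv.swap_apply_right] at this
    have h := hy ((Equiv.swap i i') j) hswj hne'
    rw [reindex_swapT_coordSing, reindex_swapT_coordSing] at h
    rw [coordSing_congr (Equiv.swap_apply_self i i' j),
      coordSing_congr (Equiv.swap_apply_right i i')] at h
    exact h
  · intro hy j hj hne
    rw [reindex_swapT_coordSing, reindex_swapT_coordSing,
      coordSing_congr (Equiv.swap_apply_right i i')]
    have hswj : (Equiv.swap i i') j ∈ Icc 1 k := swap_mem_Icc hi hi' j hj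
    have hne' : (Equiv.swap i i') j ≠ i := by
      intro he
      apply hne
      have := congrArg (Equiv.swap i i') he
      rwa [Equiv.swap_apply_self, Equiv.swap_apply_left] at this
    exact hy _ hswj hne'

lemma Smax_disjoint {k : ℕ} {i j : ℕ} (hi : i ∈ Icc 1 k) (hj : j ∈ Icc 1 k) (hij : i ≠ j) :
    Disjoint (Smax k i hi) (Smax k j hj) := by
  rw [Set.disjoint_left]
  intro y hyi hyj
  have h1 := hyi j hj (Ne.symm hij)
  have h2 := hyj i hi hij
  linarith

section withMeasure2

variable {k : ℕ} (μ : Measure (ι k → I)) [IsProbabilityMeasure μ]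
  (hμ : ∀ t : Finset (ι k),
      Measure.map (fun x (i : t) => x i) μ = Measure.pi fun _ : t => (volume : Measure I))

include hμ

lemma mu_Smax_swap {i i' : ℕ} (hi : i ∈ Icc 1 k) (hi' : i' ∈ Icc 1 k) :
    μ (π k ⁻¹' Smax k i hi) = μ (π k ⁻¹' Smax k i' hi') := by
  rw [← reindex_swap_Smax hi hi']
  exact mu_reindex μ hμ _ (measurableSet_Smax k i' hi')

lemma mu_tie_zero {a b : {x // x ∈ tk k}} (hab : a ≠ b) :
    μ (π k ⁻¹' {y : Y k | ((y a : ℝ)) = ((y b) : ℝ)}) = 0 := by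
  by_contra h
  obtain ⟨N, hN⟩ := ENNReal.exists_inv_nat_lt h
  have hN1 : 1 ≤ N := by
    by_contra hc
    have hN0 : N = 0 := by omega
    subst hN0
    rw [Nat.cast_zero, ENNReal.inv_zero] at hN
    exact absurd hN (not_lt.mpr le_top)
  have hsub : {y : Y k | ((y a : ℝ)) = ((y b) : ℝ)} ⊆
      ⋃ l ∈ Finset.range N, Box k N a b l := by
    intro y hy
    simp only [Set.mem_setOf_eq] at hy
    have heq : y a = y b := Subtype.ext hy
    simp only [Set.mem_iUnion, Finset.mem_range]
    refine ⟨lvl N (y a), ?_, rfl, by rw [← heq]⟩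
    have := lvl_le N (y a)
    omega
  have hle : μ (π k ⁻¹' {y : Y k | ((y a : ℝ)) = ((y b) : ℝ)}) ≤
      ∑ l ∈ Finset.range N, ENNReal.ofReal (1/N) * ENNReal.ofReal (1/N) := by
    calc μ (π k ⁻¹' {y : Y k | ((y a : ℝ)) = ((y b) : ℝ)})
        ≤ μ (π k ⁻¹' (⋃ l ∈ Finset.range N, Box k N a b l)) :=
          measure_mono (Set.preimage_mono hsub)
    _ = μ (⋃ l ∈ Finset.range N, π k ⁻¹' Box k N a b l) := by
          rw [Set.preimage_iUnion₂]
    _ ≤ ∑ l ∈ Finset.range N, μ (π k ⁻¹' Box k N a b l) :=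
          measure_biUnion_finset_le _ _
    _ ≤ ∑ l ∈ Finset.range N, ENNReal.ofReal (1/N) * ENNReal.ofReal (1/N) := by
          apply Finset.sum_le_sum
          intro l _
          rw [mu_pre μ hμ (measurableSet_Box k N a b l)]
          exact pi_Box_le hN1 hab l
  have harith : ∑ l ∈ Finset.range N, ENNReal.ofReal (1/N) * ENNReal.ofReal (1/N) ≤
      ((N : ℝ≥0∞))⁻¹ := by
    rw [Finset.sum_const, Finset.card_range, nsmul_eq_mul]
    have hNpos : (0:ℝ) < N := by exact_mod_cast hN1
    have hofr : ENNReal.ofReal (1/(N:ℝ)) = ((N : ℝ≥0∞))⁻¹ := by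
      rw [one_div, ENNReal.ofReal_inv_of_pos hNpos, ENNReal.ofReal_natCast]
    rw [hofr, ← mul_assoc]
    have hN0 : ((N : ℝ≥0∞)) ≠ 0 := by exact_mod_cast (by omega : N ≠ 0)
    rw [ENNReal.mul_inv_cancel hN0 (ENNReal.natCast_ne_top N), one_mul]
  exact absurd (le_trans hle harith) (not_le.mpr hN)

lemma one_le_sum_Smax (hk : 2 ≤ k) :
    (1:ℝ≥0∞) ≤ ∑ i ∈ (Icc 1 k).attach, μ (π k ⁻¹' Smax k i.1 i.2) := by
  classical
  set TieU : Set (ι k → I) :=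
    ⋃ i ∈ (Icc 1 k).attach, ⋃ j ∈ (Icc 1 k).attach, ⋃ (_ : i ≠ j),
      π k ⁻¹' {y : Y k | ((y (coordSing k i.1 i.2) : ℝ)) = ((y (coordSing k j.1 j.2)) : ℝ)}
    with hTieU
  have hTie0 : μ TieU = 0 := by
    rw [hTieU]
    apply measure_iUnion_null_iff.mpr; intro i
    apply measure_iUnion_null_iff.mpr; intro _
    apply measure_iUnion_null_iff.mpr; intro j
    apply measure_iUnion_null_iff.mpr; intro _
    apply measure_iUnion_null_iff.mpr; intro hij
    apply mu_tie_zero μ hμ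
    intro he
    apply hij
    apply Subtype.ext
    have : ({i.1} : Finset ℕ) = {j.1} := congrArg (fun z => z.1.1) he
    exact Finset.singleton_injective this
  have hcov : (Set.univ : Set (ι k → I)) ⊆
      (⋃ i ∈ (Icc 1 k).attach, π k ⁻¹' Smax k i.1 i.2) ∪ TieU := by
    intro x _
    by_cases hnt : ∀ i ∈ (Icc 1 k).attach, ∀ j ∈ (Icc 1 k).attach, i ≠ j →
        ((π k x) (coordSing k i.1 i.2) : ℝ) ≠ ((π k x) (coordSing k j.1 j.2) : ℝ)
    · left
      obtain ⟨m, hm, hmax⟩ := Finset.exists_max_image (Icc 1 k).attach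
        (fun i => ((π k x) (coordSing k i.1 i.2) : ℝ))
        ⟨⟨1, mem_Icc.mpr ⟨le_rfl, by omega⟩⟩, Finset.mem_attach _ _⟩
      simp only [Set.mem_iUnion, Set.mem_preimage]
      refine ⟨m, Finset.mem_attach _ _, ?_⟩
      intro j hj hne
      have hsub : (⟨j, hj⟩ : {x // x ∈ Icc 1 k}) ≠ m := by
        intro he; exact hne (congrArg Subtype.val he)
      have h1 := hmax ⟨j, hj⟩ (Finset.mem_attach _ _)
      have h2 := hnt ⟨j, hj⟩ (Finset.mem_attach _ _) m (Finset.mem_attach _ _) hsub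
      exact lt_of_le_of_ne h1 h2
    · right
      push_neg at hnt
      obtain ⟨i, hi, j, hj, hij, he⟩ := hnt
      rw [hTieU]
      simp only [Set.mem_iUnion, Set.mem_preimage]
      exact ⟨i, hi, j, hj, hij, he⟩
  have h1 : (1:ℝ≥0∞) = μ (Set.univ) := (measure_univ).symm
  rw [h1]
  calc μ (Set.univ : Set (ι k → I)) ≤
      μ ((⋃ i ∈ (Icc 1 k).attach, π k ⁻¹' Smax k i.1 i.2) ∪ TieU) := measure_mono hcov
  _ ≤ μ (⋃ i ∈ (Icc 1 k).attach, π k ⁻¹' Smax k i.1 i.2) + μ TieU := measure_union_le _ _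
  _ = μ (⋃ i ∈ (Icc 1 k).attach, π k ⁻¹' Smax k i.1 i.2) := by rw [hTie0, add_zero]
  _ ≤ ∑ i ∈ (Icc 1 k).attach, μ (π k ⁻¹' Smax k i.1 i.2) := measure_biUnion_finset_le _ _

lemma mu_Smax_ge (hk : 2 ≤ k) {i : ℕ} (hi : i ∈ Icc 1 k) :
    1/(k:ℝ≥0∞) ≤ μ (π k ⁻¹' Smax k i hi) := by
  have hsum := one_le_sum_Smax μ hμ hk
  have hconst : ∀ j ∈ (Icc 1 k).attach, μ (π k ⁻¹' Smax k j.1 j.2) =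
      μ (π k ⁻¹' Smax k i hi) := fun j _ => mu_Smax_swap μ hμ j.2 hi
  rw [Finset.sum_congr rfl hconst, Finset.sum_const, Finset.card_attach, Nat.card_Icc,
    nsmul_eq_mul] at hsum
  have hsum' : (1:ℝ≥0∞) ≤ (k:ℝ≥0∞) * μ (π k ⁻¹' Smax k i hi) := by
    have : ((k + 1 - 1 : ℕ) : ℝ≥0∞) = (k : ℝ≥0∞) := by norm_num
    rwa [this] at hsum
  rw [ENNReal.div_le_iff_le_mul (Or.inl (by exact_mod_cast (by omega : k ≠ 0)))
    (Or.inl (ENNReal.natCast_ne_top k))]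
  calc (1:ℝ≥0∞) ≤ (k:ℝ≥0∞) * μ (π k ⁻¹' Smax k i hi) := hsum'
  _ = μ (π k ⁻¹' Smax k i hi) * k := mul_comm _ _

end withMeasure2

lemma mem_Icc2_up {k m : ℕ} (h : m ∈ Icc 2 (k-1)) : m ∈ Icc 1 k := by
  simp only [mem_Icc] at *; omega

lemma measurableSet_BadSet (k n : ℕ) (hkI : k ∈ Icc 1 k) :
    MeasurableSet (BadSet k n hkI) := by
  apply MeasurableSet.iUnion; intro i
  apply MeasurableSet.iUnion; intro _
  apply MeasurableSet.iUnion; intro l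
  apply MeasurableSet.iUnion; intro _
  exact measurableSet_Box k n _ _ l

lemma ofReal_inv_nat (n : ℕ) (hn : 1 ≤ n) :
    ENNReal.ofReal (1/(n:ℝ)) = ((n : ℝ≥0∞))⁻¹ := by
  have hNpos : (0:ℝ) < n := by exact_mod_cast hn
  rw [one_div, ENNReal.ofReal_inv_of_pos hNpos, ENNReal.ofReal_natCast]

section withMeasure3

variable {k : ℕ} (μ : Measure (ι k → I)) [IsProbabilityMeasure μ]
  (hμ : ∀ t : Finset (ι k),
      Measure.map (fun x (i : t) => x i) μ = Measure.pi fun _ : t => (volume : Measure I))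

include hμ

lemma mu_BadSet_le (hk : 2 ≤ k) {n : ℕ} (hn : 1 ≤ n) (hkI : k ∈ Icc 1 k) :
    μ (π k ⁻¹' BadSet k n hkI) ≤ (k:ℝ≥0∞) * ENNReal.ofReal (1/n) := by
  have hq : ENNReal.ofReal (1/(n:ℝ)) = ((n : ℝ≥0∞))⁻¹ := ofReal_inv_nat n hn
  have hstep : ∀ i : {x // x ∈ Icc 1 (k-1)},
      μ (π k ⁻¹' (⋃ l ∈ Finset.range n,
        Box k n (coordSing k i.1 (mem_Icc_up i.2)) (coordSing k k hkI) l)) ≤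
      ENNReal.ofReal (1/n) := by
    intro i
    have hab : coordSing k i.1 (mem_Icc_up i.2) ≠ coordSing k k hkI := by
      intro he
      have h2 : ({i.1} : Finset ℕ) = {k} := congrArg (fun z => z.1.1) he
      have h3 := Finset.singleton_injective h2
      have := mem_Icc.mp i.2
      omega
    calc μ (π k ⁻¹' (⋃ l ∈ Finset.range n, Box k n _ _ l))
        = μ (⋃ l ∈ Finset.range n, π k ⁻¹' Box k n (coordSing k i.1 (mem_Icc_up i.2))
            (coordSing k k hkI) l) := by rw [Set.preimage_iUnion₂]
    _ ≤ ∑ l ∈ Finset.range n, μ (π k ⁻¹' Box k n (coordSing k i.1 (mem_Icc_up i.2))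
            (coordSing k k hkI) l) := measure_biUnion_finset_le _ _
    _ ≤ ∑ l ∈ Finset.range n, ENNReal.ofReal (1/n) * ENNReal.ofReal (1/n) := by
          apply Finset.sum_le_sum
          intro l _
          rw [mu_pre μ hμ (measurableSet_Box k n _ _ l)]
          exact pi_Box_le hn hab l
    _ ≤ ENNReal.ofReal (1/n) := by
          rw [Finset.sum_const, Finset.card_range, nsmul_eq_mul, hq, ← mul_assoc,
            ENNReal.mul_inv_cancel (by exact_mod_cast (by omega : n ≠ 0))
              (ENNReal.natCast_ne_top n), one_mul]
  calc μ (π k ⁻¹' BadSet k n hkI)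
      = μ (⋃ i ∈ (Icc 1 (k-1)).attach, π k ⁻¹' (⋃ l ∈ Finset.range n,
          Box k n (coordSing k i.1 (mem_Icc_up i.2)) (coordSing k k hkI) l)) := by
        rw [BadSet, Set.preimage_iUnion₂]
  _ ≤ ∑ i ∈ (Icc 1 (k-1)).attach, μ (π k ⁻¹' (⋃ l ∈ Finset.range n,
          Box k n (coordSing k i.1 (mem_Icc_up i.2)) (coordSing k k hkI) l)) :=
        measure_biUnion_finset_le _ _
  _ ≤ ∑ _i ∈ (Icc 1 (k-1)).attach, ENNReal.ofReal (1/n) :=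
        Finset.sum_le_sum (fun i _ => hstep i)
  _ ≤ (k:ℝ≥0∞) * ENNReal.ofReal (1/n) := by
        rw [Finset.sum_const, Finset.card_attach, Nat.card_Icc, nsmul_eq_mul]
        exact mul_le_mul_left (Nat.cast_le.mpr (by omega : k - 1 + 1 - 1 ≤ k)) _

omit [IsProbabilityMeasure μ] in
omit hμ in
lemma ennreal_arith (hk : 2 ≤ k) :
    ((k-2 : ℕ) : ℝ≥0∞) * (1/(k:ℝ≥0∞)) + 1/(k:ℝ≥0∞) = 1 - 1/(k:ℝ≥0∞) := by
  have hk0 : (k:ℝ≥0∞) ≠ 0 := by exact_mod_cast (by omega : k ≠ 0)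
  have hkt : (k:ℝ≥0∞) ≠ ⊤ := ENNReal.natCast_ne_top k
  rw [one_div]
  have h1 : ((k-2 : ℕ) : ℝ≥0∞) * (k:ℝ≥0∞)⁻¹ + (k:ℝ≥0∞)⁻¹ =
      (((k-2 : ℕ) : ℝ≥0∞) + 1) * (k:ℝ≥0∞)⁻¹ := by ring
  rw [h1]
  have h2 : ((k-2 : ℕ) : ℝ≥0∞) + 1 = ((k-1 : ℕ) : ℝ≥0∞) := by
    exact_mod_cast congrArg (Nat.cast : ℕ → ℝ≥0∞) (show k - 2 + 1 = k - 1 by omega)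
  rw [h2]
  apply ENNReal.eq_sub_of_add_eq (by simp [hk0])
  have h3 : ((k-1 : ℕ) : ℝ≥0∞) * (k:ℝ≥0∞)⁻¹ + (k:ℝ≥0∞)⁻¹ =
      (((k-1 : ℕ) : ℝ≥0∞) + 1) * (k:ℝ≥0∞)⁻¹ := by ring
  rw [h3]
  have h4 : ((k-1 : ℕ) : ℝ≥0∞) + 1 = (k : ℝ≥0∞) := by
    exact_mod_cast congrArg (Nat.cast : ℕ → ℝ≥0∞) (show k - 1 + 1 = k by omega)
  rw [h4]
  exact ENNReal.mul_inv_cancel hk0 hkt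

theorem lower_bound (hk : 2 ≤ k) {n : ℕ} (hn : 1 ≤ n) :
    1 - 1/(k:ℝ≥0∞) ≤ μ (π k ⁻¹' Sev k (fL k n) 0) + (k:ℝ≥0∞) * ENNReal.ofReal (1/n) := by
  classical
  have hkI : k ∈ Icc 1 k := mem_Icc.mpr ⟨by omega, le_rfl⟩
  set U : Set (Y k) := ⋃ m ∈ (Icc 2 (k-1)).attach, Smax k m.1 (mem_Icc2_up m.2) with hU
  set W : Set (Y k) := Smax k k hkI \ BadSet k n hkI with hW
  have hUm : MeasurableSet U := by
    apply MeasurableSet.iUnion; intro m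
    apply MeasurableSet.iUnion; intro _
    exact measurableSet_Smax k m.1 (mem_Icc2_up m.2)
  have hWm : MeasurableSet W :=
    (measurableSet_Smax k k hkI).diff (measurableSet_BadSet k n hkI)
  have hsubs : U ∪ W ⊆ Sev k (fL k n) 0 := by
    apply Set.union_subset
    · rw [hU]
      apply Set.iUnion₂_subset
      intro m _
      have hm := mem_Icc.mp m.2
      exact Smax_interior_subset_Sev hk hn m.1 hm.1 hm.2 (mem_Icc2_up m.2)
    · exact Smax_k_subset_Sev hk hn hkI
  have hdisj : Disjoint U W := by
    rw [Set.disjoint_left]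
    intro y hyU hyW
    rw [hU] at hyU
    simp only [Set.mem_iUnion] at hyU
    obtain ⟨m, _, hym⟩ := hyU
    have hmne : m.1 ≠ k := by have := mem_Icc.mp m.2; omega
    have := Smax_disjoint (mem_Icc2_up m.2) hkI hmne
    rw [Set.disjoint_left] at this
    exact this hym hyW.1
  have hsum : μ (π k ⁻¹' U) = ∑ m ∈ (Icc 2 (k-1)).attach,
      μ (π k ⁻¹' Smax k m.1 (mem_Icc2_up m.2)) := by
    rw [hU, Set.preimage_iUnion₂]
    apply measure_biUnion_finset
    · intro a _ b _ hab
      apply Disjoint.preimage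
      apply Smax_disjoint
      intro he
      exact hab (Subtype.ext he)
    · intro m _
      exact (measurable_π k) (measurableSet_Smax k m.1 (mem_Icc2_up m.2))
  have hcover : μ (π k ⁻¹' Smax k k hkI) ≤ μ (π k ⁻¹' W) + μ (π k ⁻¹' BadSet k n hkI) := by
    calc μ (π k ⁻¹' Smax k k hkI) ≤ μ (π k ⁻¹' (W ∪ BadSet k n hkI)) := by
          apply measure_mono
          apply Set.preimage_mono
          rw [hW]
          intro y hy
          by_cases hb : y ∈ BadSet k n hkI
          · exact Or.inr hb
          · exact Or.inl ⟨hy, hb⟩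
    _ = μ (π k ⁻¹' W ∪ π k ⁻¹' BadSet k n hkI) := by rw [Set.preimage_union]
    _ ≤ μ (π k ⁻¹' W) + μ (π k ⁻¹' BadSet k n hkI) := measure_union_le _ _
  have hcard : ((Icc 2 (k-1)).attach.card) = k - 2 := by
    rw [Finset.card_attach, Nat.card_Icc]
    omega
  calc 1 - 1/(k:ℝ≥0∞)
      = ((k-2 : ℕ) : ℝ≥0∞) * (1/(k:ℝ≥0∞)) + 1/(k:ℝ≥0∞) := (ennreal_arith hk).symm
  _ ≤ (∑ m ∈ (Icc 2 (k-1)).attach, μ (π k ⁻¹' Smax k m.1 (mem_Icc2_up m.2))) +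
      (μ (π k ⁻¹' W) + μ (π k ⁻¹' BadSet k n hkI)) := by
        apply add_le_add
        · have : ((k-2 : ℕ) : ℝ≥0∞) * (1/(k:ℝ≥0∞)) =
              ∑ _m ∈ (Icc 2 (k-1)).attach, 1/(k:ℝ≥0∞) := by
            rw [Finset.sum_const, hcard, nsmul_eq_mul]
          rw [this]
          exact Finset.sum_le_sum (fun m _ => mu_Smax_ge μ hμ hk (mem_Icc2_up m.2))
        · exact le_trans (mu_Smax_ge μ hμ hk hkI) hcover
  _ = (μ (π k ⁻¹' U) + μ (π k ⁻¹' W)) + μ (π k ⁻¹' BadSet k n hkI) := by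
        rw [hsum]; ring
  _ ≤ μ (π k ⁻¹' Sev k (fL k n) 0) + (k:ℝ≥0∞) * ENNReal.ofReal (1/n) := by
        apply add_le_add
        · calc μ (π k ⁻¹' U) + μ (π k ⁻¹' W)
              = μ (π k ⁻¹' U ∪ π k ⁻¹' W) := by
                rw [measure_union (hdisj.preimage (π k)) ((measurable_π k) hWm)]
          _ = μ (π k ⁻¹' (U ∪ W)) := by rw [Set.preimage_union]
          _ ≤ μ (π k ⁻¹' Sev k (fL k n) 0) :=
                measure_mono (Set.preimage_mono hsubs)
        · exact mu_BadSet_le μ hμ hk hn hkI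

end withMeasure3

lemma event_eq {k : ℕ} (hk : 2 ≤ k) (f : (Dom k → I) → I) :
    {x : ι k → I |
        f (fun B => x ⟨B.1, card_le_of_subset_Icc (dom_sub_Icc B)⟩) >
        f (fun B => x ⟨B.1.image (· + 1),
            le_trans Finset.card_image_le (card_le_of_subset_Icc (dom_sub_Icc B))⟩)} =
      π k ⁻¹' Sev k f 0 := by
  ext x
  simp only [Set.mem_setOf_eq, Set.mem_preimage, Sev, gt_iff_lt]
  have h0 : win k 0 (π k x) =
      (fun B : Dom k => x ⟨B.1, card_le_of_subset_Icc (dom_sub_Icc B)⟩) := by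
    funext B
    refine congrArg x (Subtype.ext ?_)
    show B.1.image ((cyc k)^[0]) = B.1
    simp
  have h1 : win k 1 (π k x) =
      (fun B : Dom k => x ⟨B.1.image (· + 1),
        le_trans Finset.card_image_le (card_le_of_subset_Icc (dom_sub_Icc B))⟩) := by
    funext B
    refine congrArg x (Subtype.ext ?_)
    show B.1.image ((cyc k)^[1]) = B.1.image (· + 1)
    rw [Function.iterate_one]
    apply Finset.image_congr
    intro i hi
    have hm := mem_Icc.mp (B.2 hi)
    exact cyc_eq_succ k hm.1 hm.2 hk
  rw [h0, h1]

end Stmt16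

/-- threshold for the shift graph `G_k` in the cube
`[0,1]^{ℕ^{[≤k]}}` (coordinates indexed by the subsets of `ℕ` of cardinality
at most `k`).  For measurable `f` defined on the coordinates indexed by the
subsets of `{1,…,k−1}`, the supremum of the measure of the set where
`f(x|_{{1,…,k−1}^{[≤k]}}) > f(x|_{{2,…,k}^{[≤k]}})` (the second restriction
taken along the shift `i ↦ i+1`) equals `1 − 1/k`. -/
theorem stmt_16 (k : ℕ) (hk : 2 ≤ k)
    (μ : Measure ({A : Finset ℕ // A.card ≤ k} → I)) [IsProbabilityMeasure μ]
    (hμ : ∀ t : Finset {A : Finset ℕ // A.card ≤ k},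
      Measure.map (fun x (i : t) => x i) μ = Measure.pi fun _ : t => (volume : Measure I)) :
    (⨆ (f : ({A : Finset ℕ // A ⊆ Finset.Icc 1 (k - 1)} → I) → I) (_ : Measurable f),
        μ {x : {A : Finset ℕ // A.card ≤ k} → I |
          f (fun B => x ⟨B.1, le_trans (Finset.card_le_card B.2)
              (by rw [Nat.card_Icc]; omega)⟩) >
          f (fun B => x ⟨B.1.image (· + 1), le_trans Finset.card_image_le
              (le_trans (Finset.card_le_card B.2) (by rw [Nat.card_Icc]; omega))⟩)}) =
      1 - 1 / (k : ℝ≥0∞) := by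
  apply le_antisymm
  · apply iSup₂_le
    intro f hf
    rw [show {x : {A : Finset ℕ // A.card ≤ k} → I |
          f (fun B => x ⟨B.1, le_trans (Finset.card_le_card B.2)
              (by rw [Nat.card_Icc]; omega)⟩) >
          f (fun B => x ⟨B.1.image (· + 1), le_trans Finset.card_image_le
              (le_trans (Finset.card_le_card B.2) (by rw [Nat.card_Icc]; omega))⟩)} =
        Stmt16.π k ⁻¹' Stmt16.Sev k f 0 from Stmt16.event_eq hk f]
    exact Stmt16.upper_bound μ hμ hk hf
  · apply ENNReal.le_of_forall_pos_le_add
    intro ε hε _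
    have hεR : (0:ℝ) < (ε:ℝ) := hε
    obtain ⟨n, hngt⟩ := exists_nat_gt ((k : ℝ) / (ε : ℝ))
    set N := max n 1 with hN
    have hN1 : 1 ≤ N := le_max_right n 1
    have hNpos : (0:ℝ) < (N:ℝ) := by exact_mod_cast hN1
    have hdiv : (k : ℝ) / (N:ℝ) ≤ (ε:ℝ) := by
      have h1 : (k : ℝ) / (ε:ℝ) < (N:ℝ) := by
        calc (k : ℝ) / (ε:ℝ) < (n:ℝ) := hngt
        _ ≤ (N:ℝ) := by exact_mod_cast le_max_left n 1
      rw [div_le_iff₀ hNpos]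
      rw [div_lt_iff₀ hεR] at h1
      nlinarith
    have hb : (k:ℝ≥0∞) * ENNReal.ofReal (1/(N:ℝ)) ≤ (ε : ℝ≥0∞) := by
      rw [show (k:ℝ≥0∞) = ENNReal.ofReal (k:ℝ) from (ENNReal.ofReal_natCast k).symm,
        ← ENNReal.ofReal_mul (by positivity)]
      calc ENNReal.ofReal ((k:ℝ) * (1/(N:ℝ))) = ENNReal.ofReal ((k:ℝ)/(N:ℝ)) := by
            rw [mul_one_div]
      _ ≤ ENNReal.ofReal (ε:ℝ) := ENNReal.ofReal_le_ofReal hdiv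
      _ = (ε : ℝ≥0∞) := ENNReal.ofReal_coe_nnreal
    have hlow := Stmt16.lower_bound μ hμ hk hN1
    have hup : μ (Stmt16.π k ⁻¹' Stmt16.Sev k (Stmt16.fL k N) 0) ≤
        ⨆ (f : ({A : Finset ℕ // A ⊆ Finset.Icc 1 (k - 1)} → I) → I) (_ : Measurable f),
          μ {x : {A : Finset ℕ // A.card ≤ k} → I |
            f (fun B => x ⟨B.1, le_trans (Finset.card_le_card B.2)
                (by rw [Nat.card_Icc]; omega)⟩) >
            f (fun B => x ⟨B.1.image (· + 1), le_trans Finset.card_image_le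
                (le_trans (Finset.card_le_card B.2) (by rw [Nat.card_Icc]; omega))⟩)} := by
      refine le_iSup_of_le (Stmt16.fL k N) ?_
      refine le_iSup_of_le (Stmt16.measurable_fL k N) ?_
      rw [← Stmt16.event_eq hk (Stmt16.fL k N)]
    calc 1 - 1 / (k : ℝ≥0∞)
        ≤ μ (Stmt16.π k ⁻¹' Stmt16.Sev k (Stmt16.fL k N) 0) +
            (k:ℝ≥0∞) * ENNReal.ofReal (1/(N:ℝ)) := hlow
    _ ≤ _ + (ε : ℝ≥0∞) := add_le_add hup hb
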